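/- Fix $k \ge 0$. Construct $G_k$ as follows: take a basic copy of $K_4$ and $k+1$ further disjoint copies of $K_4$, join every vertex of the basic copy to every vertex of each of the other copies (these are the support edges); then for each support edge $uv$, create $2k+1$ new disjoint copies of $K_4$ and join both $u$ and $v$ to all their vertices. Then $G_k$ is not $(2,k,k)$-colorable. -/
import Mathlib


/-- A graph `G` is `(d 0, …, d (k-1))`-colorable if its vertex set can be partitioned
into `k` parts such that part `i` induces a subgraph of maximum degree at most `d i`. -/
def ImpColorable {V : Type*} {k : ℕ} (G : SimpleGraph V) (d : Fin k → ℕ) : Prop :=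
  ∃ f : V → Fin k, ∀ v : V, {u | G.Adj v u ∧ f u = f v}.ncard ≤ d (f v)

/-- Vertices of `G_k`: a basic copy of `K₄`; `k+1` further copies of `K₄`; and for each
support edge (a pair of a basic vertex and a vertex of one of the `k+1` copies), `2k+1`
attached copies of `K₄`. -/
abbrev GkVert (k : ℕ) :=
  Fin 4 ⊕ (Fin (k + 1) × Fin 4) ⊕ ((Fin 4 × Fin (k + 1) × Fin 4) × Fin (2 * k + 1) × Fin 4)

/-- The graph `G_k`: every vertex of the basic `K₄` is joined to every vertex of the `k+1`
other copies of `K₄` (support edges), and for each support edge `uv` there are `2k+1`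
attached copies of `K₄` completely joined to both `u` and `v`. -/
def GkGraph (k : ℕ) : SimpleGraph (GkVert k) :=
  SimpleGraph.fromRel (fun x y =>
    match x, y with
    | .inl _, .inl _ => True
    | .inl _, .inr (.inl _) => True
    | .inr (.inl (i, _)), .inr (.inl (i', _)) => i = i'
    | .inr (.inr ((b, _), _, _)), .inl a => a = b
    | .inr (.inr ((_, c), _, _)), .inr (.inl c') => c' = c
    | .inr (.inr (e, j, _)), .inr (.inr (e', j', _)) => e = e' ∧ j = j'
    | _, _ => False)

lemma finset_le_ncard {α V : Type*} (A : Finset α) (g : α → V) (hg : Set.InjOn g A)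
    (S : Set V) (hS : ∀ a ∈ A, g a ∈ S) (hfin : S.Finite) : A.card ≤ S.ncard := by
  classical
  have h1 : ((A.image g : Finset V) : Set V) ⊆ S := by
    intro x hx
    simp only [Finset.coe_image, Set.mem_image, Finset.mem_coe] at hx
    obtain ⟨a, ha, rfl⟩ := hx
    exact hS a ha
  calc A.card = (A.image g).card := (Finset.card_image_of_injOn hg).symm
    _ = ((A.image g : Finset V) : Set V).ncard := (Set.ncard_coe_finset _).symm
    _ ≤ S.ncard := Set.ncard_le_ncard h1 hfin

lemma triple_ncard {V : Type*} {a b c : V} (hab : a ≠ b) (hac : a ≠ c) (hbc : b ≠ c) :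
    ({a, b, c} : Set V).ncard = 3 := by
  rw [Set.ncard_insert_of_notMem (by simp [hab, hac]) (Set.toFinite _),
    Set.ncard_pair hbc]

lemma dval (k : ℕ) (c : Fin 3) (hc : c ≠ 0) : ![2, k, k] c = k := by
  fin_cases c <;> simp_all

lemma fin3_cases (c c' x : Fin 3) (hc : c ≠ 0) (hc' : c' ≠ 0) (hcc' : c ≠ c') (hx : x ≠ 0) :
    x = c ∨ x = c' := by revert hc hc' hcc' hx; revert c c' x; decide

/-- No 4 distinct pairwise-adjacent vertices are all colored 0. -/
lemma quad {k : ℕ} (f : GkVert k → Fin 3)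
    (hf : ∀ v : GkVert k, {u | (GkGraph k).Adj v u ∧ f u = f v}.ncard ≤ ![2, k, k] (f v))
    (v : Fin 4 → GkVert k) (hinj : Function.Injective v)
    (hadj : ∀ i j : Fin 4, i ≠ j → (GkGraph k).Adj (v i) (v j))
    (hc : ∀ i, f (v i) = 0) : False := by
  have hsub : ({v 1, v 2, v 3} : Set (GkVert k)) ⊆
      {u | (GkGraph k).Adj (v 0) u ∧ f u = f (v 0)} := by
    intro x hx
    rcases hx with rfl | rfl | rfl
    · exact ⟨hadj _ _ (by decide), by rw [hc, hc]⟩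
    · exact ⟨hadj _ _ (by decide), by rw [hc, hc]⟩
    · exact ⟨hadj _ _ (by decide), by rw [hc, hc]⟩
  have h12 : v 1 ≠ v 2 := fun h => by have := hinj h; simp at this
  have h13 : v 1 ≠ v 3 := fun h => by have := hinj h; simp at this
  have h23 : v 2 ≠ v 3 := fun h => by have := hinj h; simp at this
  have h3 : 3 ≤ {u | (GkGraph k).Adj (v 0) u ∧ f u = f (v 0)}.ncard := by
    have h4 := Set.ncard_le_ncard hsub (Set.toFinite _)
    have h5 := triple_ncard h12 h13 h23
    omega
  have h2 := hf (v 0)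
  have h2' : ![2, k, k] (f (v 0)) = 2 := by rw [hc 0]; rfl
  omega

/-- For every `k ≥ 0`, the graph `G_k` is not `(2,k,k)`-colorable. -/
theorem GkGraph_not_2kk_colorable (k : ℕ) :
    ¬ ImpColorable (GkGraph k) ![2, k, k] := by
  rintro ⟨f, hf⟩
  have hA : ∃ a : Fin 4, f (.inl a) ≠ 0 := by
    by_contra h
    push_neg at h
    refine quad f hf (fun a => .inl a) (fun a a' h => by simpa using h) (fun i j hij => ?_) h
    simp [GkGraph, SimpleGraph.fromRel_adj, hij]
  obtain ⟨a, ha⟩ := hA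
  set c := f (.inl a) with hc
  -- every vertex of every copy C_i is colored 0 or c
  have step3 : ∀ (i : Fin (k + 1)) (j : Fin 4),
      f (.inr (.inl (i, j))) = 0 ∨ f (.inr (.inl (i, j))) = c := by
    intro i j
    by_contra h
    push_neg at h
    obtain ⟨h0, hcne⟩ := h
    set w : GkVert k := .inr (.inl (i, j)) with hw
    set c' := f w with hc'
    set g : Fin (2 * k + 1) → Fin 4 → GkVert k :=
      fun m t => .inr (.inr ((a, i, j), m, t)) with hg
    have hnz : ∀ m : Fin (2 * k + 1), ∃ t : Fin 4, f (g m t) ≠ 0 := by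
      intro m
      by_contra hmz
      push_neg at hmz
      refine quad f hf (g m) (fun t t' h => by simpa [hg] using h) (fun t t' htt' => ?_) hmz
      simp [hg, GkGraph, SimpleGraph.fromRel_adj, htt']
    choose t ht using hnz
    have hcol : ∀ m, f (g m (t m)) = c ∨ f (g m (t m)) = c' :=
      fun m => fin3_cases c c' _ ha h0 (fun e => hcne e.symm) (ht m)
    classical
    set A := Finset.univ.filter (fun m : Fin (2 * k + 1) => f (g m (t m)) = c) with hA'
    set B := Finset.univ.filter (fun m : Fin (2 * k + 1) => ¬ f (g m (t m)) = c) with hB'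
    have hAB : A.card + B.card = 2 * k + 1 := by
      rw [hA', hB', Finset.card_filter_add_card_filter_not]
      simp
    have hinjg : ∀ (s : Finset (Fin (2 * k + 1))), Set.InjOn (fun m => g m (t m)) s := by
      intro s m hm m' hm' h
      have h' : m = m' ∧ t m = t m' := by simpa [hg] using h
      exact h'.1
    have hAcard : A.card ≤ k := by
      by_contra hA2
      push_neg at hA2
      have h1 := finset_le_ncard A (fun m => g m (t m)) (hinjg A)
        {u | (GkGraph k).Adj (.inl a) u ∧ f u = c} (fun m hm => ?_) (Set.toFinite _)
      · have h2 : {u | (GkGraph k).Adj (.inl a) u ∧ f u = c}.ncard ≤ ![2, k, k] c := hf (.inl a)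
        rw [dval k c ha] at h2
        have := h1.trans h2
        omega
      · rw [hA', Finset.mem_filter] at hm
        refine ⟨?_, hm.2⟩
        simp [hg, GkGraph, SimpleGraph.fromRel_adj]
    have hBcard : B.card ≤ k := by
      by_contra hB2
      push_neg at hB2
      have h1 := finset_le_ncard B (fun m => g m (t m)) (hinjg B)
        {u | (GkGraph k).Adj w u ∧ f u = c'} (fun m hm => ?_) (Set.toFinite _)
      · have h2 : {u | (GkGraph k).Adj w u ∧ f u = c'}.ncard ≤ ![2, k, k] c' := hf w
        rw [dval k c' h0] at h2
        have := h1.trans h2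
        omega
      · rw [hB', Finset.mem_filter] at hm
        refine ⟨?_, (hcol m).resolve_left hm.2⟩
        simp [hg, hw, GkGraph, SimpleGraph.fromRel_adj]
    omega
  -- each copy C_i has a vertex colored c
  have step4 : ∀ i : Fin (k + 1), ∃ j : Fin 4, f (.inr (.inl (i, j))) = c := by
    intro i
    by_contra h
    push_neg at h
    have hz : ∀ j : Fin 4, f (.inr (.inl (i, j))) = 0 :=
      fun j => (step3 i j).resolve_right (h j)
    refine quad f hf (fun j => .inr (.inl (i, j))) (fun j j' hjj' => by simpa using hjj')
      (fun j j' hjj' => ?_) hz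
    simp [GkGraph, SimpleGraph.fromRel_adj, hjj']
  choose j hj using step4
  classical
  have h1 := finset_le_ncard (Finset.univ : Finset (Fin (k + 1)))
    (fun i => (.inr (.inl (i, j i)) : GkVert k))
    (fun i _ i' _ h => by
      have h' : i = i' ∧ j i = j i' := by simpa using h
      exact h'.1)
    {u | (GkGraph k).Adj (.inl a) u ∧ f u = c} (fun i _ => ?_) (Set.toFinite _)
  · have h2 : {u | (GkGraph k).Adj (.inl a) u ∧ f u = c}.ncard ≤ ![2, k, k] c := hf (.inl a)
    rw [dval k c ha] at h2
    have h4 := h1.trans h2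
    simp only [Finset.card_univ, Fintype.card_fin] at h4
    omega
  · exact ⟨by simp [GkGraph, SimpleGraph.fromRel_adj], hj i⟩
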